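/- arXiv:2509.09570 — 8 statements merged into one kernel-verified Lean document; each statement's English description precedes it below -/
import Mathlib

section
/- For every m×n Boolean matrix A, the induced matching number of the bipartite graph G(A) is at most the Boolean rank of A: indmatch(G(A)) ≤ brank(A). -/
/-!
A Boolean factorization `A = V ∘ H` of inner dimension `r` covers the `1`-entries of `A` by
the `r` all-ones rectangles `{i | V i ℓ} × {j | H ℓ j}`. Two distinct edges `(i, j)`, `(i', j')`
of an induced matching cannot lie in the same rectangle, since then `A i j' = 1` would join
them. So sending each edge to a rectangle containing it is injective.
-/

/-- `A` factors as a Boolean product of an `m × r` and an `r × n` Boolean matrix. -/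
def BoolFactorization {m n : ℕ} (A : Matrix (Fin m) (Fin n) Bool) (r : ℕ) : Prop :=
  ∃ (V : Matrix (Fin m) (Fin r) Bool) (H : Matrix (Fin r) (Fin n) Bool),
    ∀ i j, A i j = true ↔ ∃ ℓ : Fin r, V i ℓ = true ∧ H ℓ j = true

/-- The Boolean rank of a Boolean matrix. -/
noncomputable def brank {m n : ℕ} (A : Matrix (Fin m) (Fin n) Bool) : ℕ :=
  sInf {r | BoolFactorization A r}

/-- The bipartite graph on `Fin m ⊕ Fin n` whose biadjacency matrix is `A`. -/
def graphOf {m n : ℕ} (A : Matrix (Fin m) (Fin n) Bool) : SimpleGraph (Fin m ⊕ Fin n) :=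
  SimpleGraph.fromRel (fun u v => ∃ i j, u = Sum.inl i ∧ v = Sum.inr j ∧ A i j = true)

/-- `M` is an induced matching of `G`: a set of edges of `G`, pairwise disjoint,
such that no edge of `G` joins endpoints of two distinct edges of `M`. -/
def IsInducedMatching {V : Type*} (G : SimpleGraph V) (M : Finset (Sym2 V)) : Prop :=
  (↑M ⊆ G.edgeSet) ∧
  (∀ e ∈ M, ∀ f ∈ M, e ≠ f → ∀ v, v ∈ e → v ∉ f) ∧
  (∀ e ∈ M, ∀ f ∈ M, e ≠ f → ∀ u ∈ e, ∀ v ∈ f, ¬ G.Adj u v)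

/-- The induced matching number of a simple graph. -/
noncomputable def indmatch {V : Type*} (G : SimpleGraph V) : ℕ :=
  sSup {s | ∃ M : Finset (Sym2 V), IsInducedMatching G M ∧ M.card = s}

section BooleanRank

variable {m n : ℕ} (A : Matrix (Fin m) (Fin n) Bool)

theorem boolFactorization_self : BoolFactorization A m :=
  ⟨fun i ℓ => decide (i = ℓ), A, fun i j => by simp⟩

theorem boolFactorization_brank : BoolFactorization A (brank A) :=
  Nat.sInf_mem (s := {r | BoolFactorization A r}) ⟨m, boolFactorization_self A⟩

@[simp]
theorem graphOf_adj_inl_inr (i : Fin m) (j : Fin n) :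
    (graphOf A).Adj (Sum.inl i) (Sum.inr j) ↔ A i j = true := by
  simp [graphOf]

theorem exists_inl_inr_mem_of_mem_edgeSet_graphOf {e : Sym2 (Fin m ⊕ Fin n)}
    (he : e ∈ (graphOf A).edgeSet) :
    ∃ i j, A i j = true ∧ Sum.inl i ∈ e ∧ Sum.inr j ∈ e := by
  induction e using Sym2.ind with
  | _ u v =>
    rw [SimpleGraph.mem_edgeSet, graphOf, SimpleGraph.fromRel_adj] at he
    rcases he with ⟨-, ⟨i, j, rfl, rfl, hA⟩ | ⟨i, j, rfl, rfl, hA⟩⟩ <;>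
      exact ⟨i, j, hA, by simp, by simp⟩

theorem IsInducedMatching.card_le_of_boolFactorization {r : ℕ} (hr : BoolFactorization A r)
    {M : Finset (Sym2 (Fin m ⊕ Fin n))} (hM : IsInducedMatching (graphOf A) M) :
    M.card ≤ r := by
  obtain ⟨V, H, hVH⟩ := hr
  have hrect : ∀ e : M, ∃ ℓ : Fin r, ∃ i j, Sum.inl i ∈ e.1 ∧ Sum.inr j ∈ e.1 ∧
      V i ℓ = true ∧ H ℓ j = true := by
    intro e
    obtain ⟨i, j, hA, hi, hj⟩ := exists_inl_inr_mem_of_mem_edgeSet_graphOf A (hM.1 e.2)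
    obtain ⟨ℓ, hV, hH⟩ := (hVH i j).mp hA
    exact ⟨ℓ, i, j, hi, hj, hV, hH⟩
  choose ℓ i j hi hj hV hH using hrect
  suffices Function.Injective ℓ by simpa using Fintype.card_le_of_injective ℓ this
  intro e f hef
  by_contra hne
  have hcross : A (i e) (j f) = true := (hVH _ _).mpr ⟨ℓ e, hV e, hef ▸ hH f⟩
  exact hM.2.2 e e.2 f f.2 (Subtype.coe_ne_coe.mpr hne) _ (hi e) _ (hj f)
    ((graphOf_adj_inl_inr A _ _).mpr hcross)

end BooleanRank

theorem indmatch_le_brank (m n : ℕ) (A : Matrix (Fin m) (Fin n) Bool) :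
    indmatch (graphOf A) ≤ brank A := by
  refine csSup_le' ?_
  rintro s ⟨M, hM, rfl⟩
  exact hM.card_le_of_boolFactorization A (boolFactorization_brank A)
end

section
/- Let A be an m×n Boolean matrix, k a field, and (i,j), (k,ℓ) two distinct positions in Fin m × Fin n. Then (i,j) and (k,ℓ) form an isolated pair of A if and only if the monomial X (i,j) · X (k,ℓ) belongs to the determinantal ideal I_2(A[x]). -/
/-- The positions `p` and `q` form an isolated pair of ones of `A`. -/
def IsolatedPair {m n : ℕ} (A : Matrix (Fin m) (Fin n) Bool) (p q : Fin m × Fin n) : Prop :=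
  A p.1 p.2 = true ∧ A q.1 q.2 = true ∧ ¬(A p.1 q.2 = true ∧ A q.1 p.2 = true)

/-- The generic matrix `A[x]`: the `(i,j)` entry is the variable `X (i,j)` if
`A i j = true` and `0` otherwise. -/
noncomputable def AX {m n : ℕ} (k : Type*) [Field k] (A : Matrix (Fin m) (Fin n) Bool) :
    Matrix (Fin m) (Fin n) (MvPolynomial (Fin m × Fin n) k) :=
  Matrix.of fun i j => if A i j = true then MvPolynomial.X (i, j) else 0

/-- The `t`-th determinantal ideal of `A[x]`, generated by the determinants of all
`t × t` submatrices of `A[x]`. -/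
noncomputable def detIdeal {m n : ℕ} (k : Type*) [Field k]
    (A : Matrix (Fin m) (Fin n) Bool) (t : ℕ) : Ideal (MvPolynomial (Fin m × Fin n) k) :=
  Ideal.span {f | ∃ (ρ : Fin t → Fin m) (γ : Fin t → Fin n),
    Function.Injective ρ ∧ Function.Injective γ ∧
    f = (Matrix.of fun a b => AX k A (ρ a) (γ b)).det}

/-!
An isolated pair `p, q` makes `X p * X q` itself the `2 × 2` minor on rows `p.1, q.1` and
columns `p.2, q.2`, the cross term vanishing. Conversely, `I_2(A[x])` lies in the kernel of every
evaluation `X ↦ v` that turns `A[x]` into a rank-one matrix, since all `2 × 2` minors of such a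
matrix vanish. The indicator of `{p, q}` is such a point as soon as one of `A p`, `A q` is zero
(the evaluated matrix then lives in a single row), and the indicator of the rectangle spanned by
`p, q` is one when all four of its corners are ones of `A`; both evaluate `X p * X q` to `1`.
-/

open MvPolynomial Matrix

theorem Matrix.eq_vecMulVec_single_of_forall_ne_row {ι κ R : Type*} [DecidableEq ι]
    [MulZeroOneClass R] {M : Matrix ι κ R} {i₀ : ι} (hM : ∀ i j, i ≠ i₀ → M i j = 0) :
    M = vecMulVec (Pi.single i₀ 1) (M i₀) := by
  ext i j
  by_cases hi : i = i₀
  · simp [vecMulVec_apply, hi]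
  · simp [vecMulVec_apply, hi, hM i j hi]

section

variable {m n : ℕ} {k : Type*} [Field k] {A : Matrix (Fin m) (Fin n) Bool}

theorem AX_map_eval (v : Fin m × Fin n → k) :
    (AX k A).map (eval v) = Matrix.of fun i j => if A i j = true then v (i, j) else 0 := by
  ext i j
  simp [AX, apply_ite (eval v)]

theorem detIdeal_le_ker_eval {t : ℕ} {v : Fin m × Fin n → k}
    (hv : ∀ (ρ : Fin t → Fin m) (γ : Fin t → Fin n), Function.Injective ρ → Function.Injective γ →
      (((AX k A).map (eval v)).submatrix ρ γ).det = 0) :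
    detIdeal k A t ≤ RingHom.ker (eval v) := by
  rw [detIdeal, Ideal.span_le]
  rintro _ ⟨ρ, γ, hρ, hγ, rfl⟩
  exact (RingHom.map_det (eval v) _).trans (hv ρ γ hρ hγ)

theorem detIdeal_le_ker_eval_of_map_eq_vecMulVec {t : ℕ} (ht : 2 ≤ t)
    {v : Fin m × Fin n → k} {u : Fin m → k} {w : Fin n → k}
    (h : (AX k A).map (eval v) = vecMulVec u w) :
    detIdeal k A t ≤ RingHom.ker (eval v) := by
  have : Nontrivial (Fin t) := Fin.nontrivial_iff_two_le.mpr ht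
  refine detIdeal_le_ker_eval fun ρ γ _ _ => ?_
  rw [h]
  exact det_vecMulVec (u ∘ ρ) (w ∘ γ)

theorem IsolatedPair.fst_ne {p q : Fin m × Fin n} (h : IsolatedPair A p q) : p.1 ≠ q.1 := by
  intro hpq
  exact h.2.2 ⟨hpq ▸ h.2.1, hpq ▸ h.1⟩

theorem IsolatedPair.snd_ne {p q : Fin m × Fin n} (h : IsolatedPair A p q) : p.2 ≠ q.2 := by
  intro hpq
  exact h.2.2 ⟨hpq ▸ h.1, hpq ▸ h.2.1⟩

theorem IsolatedPair.X_mul_X_mem_detIdeal {p q : Fin m × Fin n} (h : IsolatedPair A p q) :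
    X p * X q ∈ detIdeal k A 2 := by
  refine Ideal.subset_span ⟨![p.1, q.1], ![p.2, q.2], injective_pair_iff_ne.mpr h.fst_ne,
    injective_pair_iff_ne.mpr h.snd_ne, ?_⟩
  obtain ⟨hp, hq, hcross⟩ := h
  rcases not_and_or.mp hcross with h | h <;> simp [det_fin_two, AX, hp, hq, h]

theorem apply_fst_snd_of_X_mul_X_mem_detIdeal {p q : Fin m × Fin n}
    (h : X p * X q ∈ detIdeal k A 2) : A p.1 p.2 = true := by
  by_contra hp
  let v : Fin m × Fin n → k := fun z => if z = p ∨ z = q then 1 else 0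
  have hrow : ∀ i j, i ≠ q.1 → (AX k A).map (eval v) i j = 0 := by
    intro i j hi
    simp only [AX_map_eval, of_apply, v, ite_eq_right_iff]
    rintro hA (rfl | rfl) <;> simp_all
  have := detIdeal_le_ker_eval_of_map_eq_vecMulVec le_rfl
    (eq_vecMulVec_single_of_forall_ne_row hrow) h
  simp [v] at this

theorem isolatedPair_of_X_mul_X_mem_detIdeal {p q : Fin m × Fin n}
    (h : X p * X q ∈ detIdeal k A 2) : IsolatedPair A p q := by
  have hp := apply_fst_snd_of_X_mul_X_mem_detIdeal h
  have hq := apply_fst_snd_of_X_mul_X_mem_detIdeal (mul_comm (X p : MvPolynomial _ k) (X q) ▸ h)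
  refine ⟨hp, hq, fun ⟨hpq, hqp⟩ => ?_⟩
  let u : Fin m → k := fun i => if i = p.1 ∨ i = q.1 then 1 else 0
  let w : Fin n → k := fun j => if j = p.2 ∨ j = q.2 then 1 else 0
  have hrect : (AX k A).map (eval fun z => u z.1 * w z.2) = vecMulVec u w := by
    ext i j
    simp only [AX_map_eval, of_apply, vecMulVec_apply, ite_eq_left_iff]
    intro hA
    by_cases hi : i = p.1 ∨ i = q.1
    · by_cases hj : j = p.2 ∨ j = q.2
      · rcases hi with rfl | rfl <;> rcases hj with rfl | rfl <;> simp_all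
      · simp [w, hj]
    · simp [u, hi]
  have := detIdeal_le_ker_eval_of_map_eq_vecMulVec le_rfl hrect h
  simp [u, w] at this

end

theorem isolatedPair_iff_mem_detIdeal_general (m n : ℕ) (A : Matrix (Fin m) (Fin n) Bool)
    (k : Type*) [Field k] (p q : Fin m × Fin n) :
    IsolatedPair A p q ↔ MvPolynomial.X p * MvPolynomial.X q ∈ detIdeal k A 2 :=
  ⟨IsolatedPair.X_mul_X_mem_detIdeal, isolatedPair_of_X_mul_X_mem_detIdeal⟩

theorem isolatedPair_iff_mem_detIdeal (m n : ℕ) (A : Matrix (Fin m) (Fin n) Bool)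
    (k : Type*) [Field k] (p q : Fin m × Fin n) (hpq : p ≠ q) :
    IsolatedPair A p q ↔ MvPolynomial.X p * MvPolynomial.X q ∈ detIdeal k A 2 :=
  isolatedPair_iff_mem_detIdeal_general m n A k p q
end

section
/- Let A be an m×n Boolean matrix, k a field, and s ≥ 1. Let (i_1,j_1), …, (i_s,j_s) be positions with i_1, …, i_s pairwise distinct and j_1, …, j_s pairwise distinct. If the squarefree monomial X (i_1,j_1) ⋯ X (i_s,j_s) belongs to the determinantal ideal I_s(A[x]), then this monomial is equal to the determinant of the s×s matrix whose (a,b) entry is A[x] (i_a) (j_b). -/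
/-!
Killing every variable outside the rows `i` and columns `j` maps the monomial to itself and
every `s`-minor of `A[x]` either to `0` or to `± D`, where `D` is the minor on rows `i` and
columns `j`; hence the monomial is a multiple of `D`, and since both are homogeneous of degree `s`
it is `c D` for a scalar `c`. Killing in addition every variable off the "diagonal"
`(i a, j a)` turns `D` into `∏ₐ A[x] (i a) (j a)`, which must then be nonzero, i.e. equal to the
monomial; so `c = 1`.
-/

open MvPolynomial

theorem Function.Injective.exists_perm_eq_comp {ι α : Type*} [Finite ι] {f g : ι → α}
    (hg : Function.Injective g) (h : Set.range g ⊆ Set.range f) :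
    ∃ e : Equiv.Perm ι, g = f ∘ e := by
  obtain ⟨e, rfl⟩ := Set.range_subset_range_iff_exists_comp.mp h
  exact ⟨Equiv.ofBijective e (Finite.injective_iff_bijective.mp hg.of_comp), rfl⟩

theorem Matrix.det_submatrix_mem_span_det_submatrix {ι α β R : Type*} [Fintype ι]
    [DecidableEq ι] [CommRing R] (B : Matrix α β R) {i ρ : ι → α} {j γ : ι → β}
    (hρ : Function.Injective ρ) (hγ : Function.Injective γ)
    (hrow : ∀ p ∉ Set.range i, ∀ q, B p q = 0)
    (hcol : ∀ q ∉ Set.range j, ∀ p, B p q = 0) :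
    (B.submatrix ρ γ).det ∈ Ideal.span {(B.submatrix i j).det} := by
  by_cases hρi : Set.range ρ ⊆ Set.range i
  · by_cases hγj : Set.range γ ⊆ Set.range j
    · obtain ⟨σ, rfl⟩ := hρ.exists_perm_eq_comp hρi
      obtain ⟨τ, rfl⟩ := hγ.exists_perm_eq_comp hγj
      have hperm : B.submatrix (i ∘ σ) (j ∘ τ) =
          ((B.submatrix i j).submatrix id τ).submatrix σ id := rfl
      rw [hperm, det_permute, det_permute']
      exact Ideal.mul_mem_left _ _ (Ideal.mul_mem_left _ _ (Ideal.mem_span_singleton_self _))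
    · obtain ⟨_, ⟨b, rfl⟩, hb⟩ := Set.not_subset.mp hγj
      rw [det_eq_zero_of_column_eq_zero (A := B.submatrix ρ γ) b fun a => hcol _ hb _]
      exact Ideal.zero_mem _
  · obtain ⟨_, ⟨a, rfl⟩, ha⟩ := Set.not_subset.mp hρi
    rw [det_eq_zero_of_row_eq_zero (A := B.submatrix ρ γ) a fun b => hrow _ ha _]
    exact Ideal.zero_mem _

namespace MvPolynomial

variable {σ R : Type*}

theorem homogeneousComponent_add_mul_of_isHomogeneous [CommSemiring R] {p q : MvPolynomial σ R}
    {n : ℕ} (m : ℕ) (hq : q.IsHomogeneous n) :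
    homogeneousComponent (m + n) (p * q) = homogeneousComponent m p * q := by
  let _ := gradedAlgebra (σ := σ) (R := R)
  rw [← decomposition.decompose'_apply, ← decomposition.decompose'_apply]
  exact DirectSum.coe_decompose_mul_add_of_right_mem (𝒜 := homogeneousSubmodule σ R) (a := p)
    (i := m) ((mem_homogeneousSubmodule n q).mpr hq)

theorem IsHomogeneous.eq_C_coeff_zero_mul [CommSemiring R] {p q r : MvPolynomial σ R} {n : ℕ}
    (hp : p.IsHomogeneous n) (hr : r.IsHomogeneous n) (h : p = q * r) :
    p = C (coeff 0 q) * r := by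
  rw [← homogeneousComponent_zero, ← homogeneousComponent_add_mul_of_isHomogeneous 0 hr, ← h,
    zero_add, homogeneousComponent_eq_self hp]

theorem isHomogeneous_det [CommRing R] {ι : Type*} [Fintype ι] [DecidableEq ι]
    {N : Matrix ι ι (MvPolynomial σ R)} (hN : ∀ a b, (N a b).IsHomogeneous 1) :
    N.det.IsHomogeneous (Fintype.card ι) := by
  rw [Matrix.det_apply]
  refine IsHomogeneous.sum _ _ _ fun e _ => ?_
  rw [← mem_homogeneousSubmodule, Units.smul_def]
  refine zsmul_mem ((mem_homogeneousSubmodule _ _).mpr ?_) _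
  convert IsHomogeneous.prod _ _ (fun _ => 1) fun a _ => hN (e a) a
  simp

theorem aeval_indicator_X_prod [CommSemiring R] {ι : Type*} (S : Set σ) (t : Finset ι)
    {f : ι → σ} (hf : ∀ a ∈ t, f a ∈ S) :
    aeval (S.indicator X) (∏ a ∈ t, X (f a) : MvPolynomial σ R) =
      ∏ a ∈ t, (X (f a) : MvPolynomial σ R) := by
  rw [map_prod]
  exact Finset.prod_congr rfl fun a ha => by rw [aeval_X, Set.indicator_of_mem (hf a ha)]

end MvPolynomial

section DeterminantalIdeal

variable {m n : ℕ} {k : Type*} [Field k] (A : Matrix (Fin m) (Fin n) Bool)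

theorem isHomogeneous_AX (p : Fin m) (q : Fin n) : (AX k A p q).IsHomogeneous 1 := by
  simp only [AX, Matrix.of_apply]
  split_ifs
  exacts [isHomogeneous_X k _, isHomogeneous_zero _ _ _]

theorem aeval_indicator_X_AX_of_mem {S : Set (Fin m × Fin n)} {p : Fin m} {q : Fin n}
    (h : (p, q) ∈ S) :
    aeval (S.indicator X : _ → MvPolynomial (Fin m × Fin n) k) (AX k A p q) = AX k A p q := by
  simp only [AX, Matrix.of_apply]
  split_ifs <;> simp [h]

theorem aeval_indicator_X_AX_of_notMem {S : Set (Fin m × Fin n)} {p : Fin m} {q : Fin n}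
    (h : (p, q) ∉ S) :
    aeval (S.indicator X : _ → MvPolynomial (Fin m × Fin n) k) (AX k A p q) = 0 := by
  simp only [AX, Matrix.of_apply]
  split_ifs <;> simp [h]

theorem prod_X_mem_span_det_of_mem_detIdeal {s : ℕ} {i : Fin s → Fin m} {j : Fin s → Fin n}
    (h : (∏ a, X (i a, j a) : MvPolynomial (Fin m × Fin n) k) ∈ detIdeal k A s) :
    (∏ a, X (i a, j a) : MvPolynomial (Fin m × Fin n) k) ∈
      Ideal.span {((AX k A).submatrix i j).det} := by
  set S := Set.range i ×ˢ Set.range j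
  set φ := aeval (R := k) (S.indicator (X : _ → MvPolynomial (Fin m × Fin n) k))
  set B := (AX k A).map φ
  have hBij : B.submatrix i j = (AX k A).submatrix i j :=
    Matrix.ext fun a b => aeval_indicator_X_AX_of_mem A ⟨⟨a, rfl⟩, ⟨b, rfl⟩⟩
  have hmap : (detIdeal k A s).map φ ≤ Ideal.span {((AX k A).submatrix i j).det} := by
    rw [detIdeal, Ideal.map_span, Ideal.span_le]
    rintro _ ⟨_, ⟨ρ, γ, hρ, hγ, rfl⟩, rfl⟩
    rw [AlgHom.map_det, ← hBij]
    refine B.det_submatrix_mem_span_det_submatrix hρ hγ (fun p hp q => ?_) fun q hq p => ?_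
    · exact aeval_indicator_X_AX_of_notMem A fun h => hp h.1
    · exact aeval_indicator_X_AX_of_notMem A fun h => hq h.2
  rw [← aeval_indicator_X_prod (R := k) S _ fun a _ => ⟨⟨a, rfl⟩, ⟨a, rfl⟩⟩]
  exact hmap (Ideal.mem_map_of_mem φ h)

theorem aeval_indicator_X_det_submatrix {s : ℕ} {i : Fin s → Fin m} {j : Fin s → Fin n}
    (hi : Function.Injective i) (hj : Function.Injective j) :
    aeval ((Set.range fun a => (i a, j a)).indicator X : _ → MvPolynomial (Fin m × Fin n) k)
      ((AX k A).submatrix i j).det = ∏ a, AX k A (i a) (j a) := by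
  rw [AlgHom.map_det]
  convert Matrix.det_diagonal (d := fun a => AX k A (i a) (j a))
  refine Matrix.ext fun a b => ?_
  by_cases hab : a = b
  · subst hab
    exact (aeval_indicator_X_AX_of_mem A (Set.mem_range_self a)).trans
      (Matrix.diagonal_apply_eq (fun a => AX k A (i a) (j a)) a).symm
  · refine (aeval_indicator_X_AX_of_notMem A ?_).trans (Matrix.diagonal_apply_ne _ hab).symm
    rintro ⟨c, hc⟩
    exact hab ((hi (congrArg Prod.fst hc)).symm.trans (hj (congrArg Prod.snd hc)))

end DeterminantalIdeal

theorem monomial_mem_detIdeal_eq_det_general (m n s : ℕ)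
    (A : Matrix (Fin m) (Fin n) Bool) (k : Type*) [Field k]
    (i : Fin s → Fin m) (j : Fin s → Fin n)
    (hi : Function.Injective i) (hj : Function.Injective j)
    (h : (∏ a : Fin s, MvPolynomial.X (i a, j a) : MvPolynomial (Fin m × Fin n) k)
      ∈ detIdeal k A s) :
    (∏ a : Fin s, MvPolynomial.X (i a, j a) : MvPolynomial (Fin m × Fin n) k)
      = (Matrix.of fun a b => AX k A (i a) (j b)).det := by
  set M : MvPolynomial (Fin m × Fin n) k := ∏ a, X (i a, j a)
  obtain ⟨q, hq⟩ := Ideal.mem_span_singleton'.mp (prod_X_mem_span_det_of_mem_detIdeal A h)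
  have hM_hom : M.IsHomogeneous (Fintype.card (Fin s)) := by
    simpa using
      IsHomogeneous.prod Finset.univ _ (fun _ => 1) fun a _ => isHomogeneous_X k (i a, j a)
  have hMD : M = C (coeff 0 q) * ((AX k A).submatrix i j).det :=
    hM_hom.eq_C_coeff_zero_mul (isHomogeneous_det fun a b => isHomogeneous_AX A _ _) hq.symm
  have hM_diag : M = C (coeff 0 q) * ∏ a, AX k A (i a) (j a) := by
    have hM_fixed : aeval ((Set.range fun a => (i a, j a)).indicator X) M = M :=
      aeval_indicator_X_prod _ _ fun a _ => Set.mem_range_self a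
    conv_lhs => rw [← hM_fixed, hMD]
    rw [map_mul, aeval_C, algebraMap_eq, aeval_indicator_X_det_submatrix A hi hj]
  have hM0 : M ≠ 0 := Finset.prod_ne_zero_iff.mpr fun a _ => X_ne_zero _
  have hdiag : ∏ a, AX k A (i a) (j a) = M := by
    refine Finset.prod_congr rfl fun a _ => if_pos ?_
    by_contra ha
    refine hM0 (hM_diag.trans ?_)
    rw [Finset.prod_eq_zero (Finset.mem_univ a) (if_neg ha), mul_zero]
  have hc : C (coeff 0 q) = (1 : MvPolynomial (Fin m × Fin n) k) :=
    mul_right_cancel₀ hM0 ((one_mul M).trans (hdiag ▸ hM_diag)).symm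
  rw [hMD, hc, one_mul]
  rfl

theorem monomial_mem_detIdeal_eq_det (m n s : ℕ) (hs : 1 ≤ s)
    (A : Matrix (Fin m) (Fin n) Bool) (k : Type*) [Field k]
    (i : Fin s → Fin m) (j : Fin s → Fin n)
    (hi : Function.Injective i) (hj : Function.Injective j)
    (h : (∏ a : Fin s, MvPolynomial.X (i a, j a) : MvPolynomial (Fin m × Fin n) k)
      ∈ detIdeal k A s) :
    (∏ a : Fin s, MvPolynomial.X (i a, j a) : MvPolynomial (Fin m × Fin n) k)
      = (Matrix.of fun a b => AX k A (i a) (j b)).det :=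
  monomial_mem_detIdeal_eq_det_general m n s A k i j hi hj h
end

section
/- Let A be an m×n Boolean matrix and k a field. A finite subset T ⊆ S(A) satisfies ∏_{p ∈ T} X p ∉ J_A if and only if T is an isolated set of A. -/
/-- The support of `A`: the positions at which `A` is `true`. -/
abbrev Supp {m n : ℕ} (A : Matrix (Fin m) (Fin n) Bool) : Type :=
  {p : Fin m × Fin n // A p.1 p.2 = true}

/-- A finite subset of the support of `A` is an isolated set if its elements are
pairwise isolated. -/
def IsIsolatedSubset {m n : ℕ} (A : Matrix (Fin m) (Fin n) Bool)
    (T : Finset (Supp A)) : Prop :=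
  ∀ p ∈ T, ∀ q ∈ T, p ≠ q → IsolatedPair A p.1 q.1

/-- The isolation ideal `J_A` of `A`: the Stanley–Reisner ideal of the isolation
complex together with the squares of all the variables. -/
noncomputable def isolationIdeal {m n : ℕ} (k : Type*) [Field k]
    (A : Matrix (Fin m) (Fin n) Bool) : Ideal (MvPolynomial (Supp A) k) :=
  Ideal.span ({f | ∃ p : Supp A, f = MvPolynomial.X p ^ 2} ∪
    {f | ∃ T : Finset (Supp A), ¬ IsIsolatedSubset A T ∧ f = ∏ p ∈ T, MvPolynomial.X p})

namespace Finsupp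

variable {σ : Type*}

theorem sum_single_one_le_sum_single_one_iff {U T : Finset σ} :
    ∑ p ∈ U, single p 1 ≤ ∑ p ∈ T, single p 1 ↔ U ⊆ T := by
  classical
  rw [← orderIsoMultiset.le_iff_le, coe_orderIsoMultiset, toMultiset_sum_single,
    toMultiset_sum_single, one_nsmul, one_nsmul, Finset.val_le_iff]

theorem single_two_not_le_sum_single_one (p : σ) (T : Finset σ) :
    ¬ single p 2 ≤ ∑ q ∈ T, single q 1 := by
  classical
  intro h
  have := h p
  simp only [single_eq_same, finsetSum_apply, single_apply, Finset.sum_ite_eq'] at this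
  split_ifs at this <;> omega

end Finsupp

namespace MvPolynomial

variable {σ R : Type*} [CommSemiring R]

open Finsupp

theorem prod_X_eq_monomial_sum_single (T : Finset σ) :
    ∏ p ∈ T, X p = monomial (∑ p ∈ T, single p 1) (1 : R) :=
  (monomial_sum_one T _).symm

theorem prod_X_mem_span_X_sq_union_prod_X_iff [Nontrivial R] (P : Finset σ → Prop)
    (T : Finset σ) :
    (∏ p ∈ T, X p : MvPolynomial σ R) ∈
        Ideal.span ({f | ∃ p, f = X p ^ 2} ∪ {f | ∃ U, P U ∧ f = ∏ p ∈ U, X p}) ↔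
      ∃ U, P U ∧ U ⊆ T := by
  classical
  have hgen : {f | ∃ p, f = X p ^ 2} ∪ {f | ∃ U, P U ∧ f = ∏ p ∈ U, X p} =
      (fun d => monomial d (1 : R)) ''
        ({d | ∃ p, d = single p 2} ∪ {d | ∃ U, P U ∧ d = ∑ p ∈ U, single p 1}) := by
    rw [Set.image_union]
    congr 1 <;> ext f <;>
      simp [X_pow_eq_monomial, prod_X_eq_monomial_sum_single, @eq_comm _ f]
  rw [hgen, mem_ideal_span_monomial_image, prod_X_eq_monomial_sum_single, support_monomial,
    if_neg one_ne_zero]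
  simp only [Finset.mem_singleton, forall_eq, Set.mem_union, Set.mem_ofPred_eq]
  constructor
  · rintro ⟨_, ⟨p, rfl⟩ | ⟨U, hU, rfl⟩, hle⟩
    · exact absurd hle (single_two_not_le_sum_single_one p T)
    · exact ⟨U, hU, sum_single_one_le_sum_single_one_iff.1 hle⟩
  · rintro ⟨U, hU, hUT⟩
    exact ⟨_, Or.inr ⟨U, hU, rfl⟩, sum_single_one_le_sum_single_one_iff.2 hUT⟩

end MvPolynomial

theorem IsIsolatedSubset.mono {m n : ℕ} {A : Matrix (Fin m) (Fin n) Bool} {T U : Finset (Supp A)}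
    (hT : IsIsolatedSubset A T) (hUT : U ⊆ T) : IsIsolatedSubset A U :=
  fun p hp q hq hpq => hT p (hUT hp) q (hUT hq) hpq

theorem prod_notMem_isolationIdeal_iff (m n : ℕ) (A : Matrix (Fin m) (Fin n) Bool)
    (k : Type*) [Field k] (T : Finset (Supp A)) :
    (∏ p ∈ T, MvPolynomial.X p : MvPolynomial (Supp A) k) ∉ isolationIdeal k A ↔
      IsIsolatedSubset A T := by
  rw [isolationIdeal, MvPolynomial.prod_X_mem_span_X_sq_union_prod_X_iff, not_exists]
  constructor
  · intro h
    by_contra hT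
    exact h T ⟨hT, subset_rfl⟩
  · rintro hT U ⟨hU, hUT⟩
    exact hU (hT.mono hUT)
end

section
/- Let A be an m×n Boolean matrix and k a field. For every natural number d, there exists a monomial of degree d in R[A] not belonging to the isolation ideal J_A if and only if d ≤ ι(A). Consequently the top degree of the quotient ring R[A]/J_A, i.e. the greatest d with a nonzero degree-d homogeneous component, equals the isolation number ι(A). -/
/-- `T` is a set of ones of `A` that are pairwise isolated. -/
def IsIsolatedSet {m n : ℕ} (A : Matrix (Fin m) (Fin n) Bool)
    (T : Finset (Fin m × Fin n)) : Prop :=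
  (∀ p ∈ T, A p.1 p.2 = true) ∧ ∀ p ∈ T, ∀ q ∈ T, p ≠ q → IsolatedPair A p q

/-- The isolation number of `A`: the maximum cardinality of an isolated set. -/
noncomputable def isolationNumber {m n : ℕ} (A : Matrix (Fin m) (Fin n) Bool) : ℕ :=
  sSup {s | ∃ T : Finset (Fin m × Fin n), IsIsolatedSet A T ∧ T.card = s}

/-!
`J_A` is a monomial ideal, so a polynomial lies outside it iff one of its monomials does, and a
monomial avoids `J_A` iff it is squarefree with isolated support. So the degrees of homogeneous
polynomials outside `J_A` are exactly the cardinalities of isolated sets, and these form the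
interval `[0, ι(A)]` because subsets of isolated sets are isolated.
-/

namespace Finsupp

variable {α : Type*}

theorem finsetSum_single_one_apply [DecidableEq α] (T : Finset α) (a : α) :
    (∑ p ∈ T, single p 1 : α →₀ ℕ) a = if a ∈ T then 1 else 0 := by
  simp [finsetSum_apply, single_apply]

theorem support_finsetSum_single_one (T : Finset α) :
    (∑ p ∈ T, single p 1 : α →₀ ℕ).support = T := by
  classical
  ext a
  simp [finsetSum_single_one_apply]

theorem finsetSum_single_one_le_iff {T : Finset α} {f : α →₀ ℕ} :
    ∑ p ∈ T, single p 1 ≤ f ↔ T ⊆ f.support := by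
  classical
  simp only [le_def, finsetSum_single_one_apply, Finset.subset_iff, mem_support_iff]
  refine ⟨fun h a ha => ?_, fun h a => ?_⟩
  · simpa [ha, Nat.one_le_iff_ne_zero] using h a
  · split_ifs with ha
    · exact Nat.one_le_iff_ne_zero.mpr (h ha)
    · exact Nat.zero_le _

theorem degree_finsetSum_single_one (T : Finset α) :
    degree (∑ p ∈ T, single p 1 : α →₀ ℕ) = T.card := by
  simp [map_sum]

theorem degree_eq_card_support_of_le_one {f : α →₀ ℕ} (hf : ∀ a, f a ≤ 1) :
    f.degree = f.support.card := by
  rw [degree_apply, Finset.card_eq_sum_ones]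
  refine Finset.sum_congr rfl fun a ha => ?_
  have := mem_support_iff.mp ha
  have := hf a
  omega

end Finsupp

theorem IsLowerSet.le_sSup_card_iff {α : Type*} [Fintype α] {F : Set (Finset α)}
    (hF : IsLowerSet F) (hne : F.Nonempty) {d : ℕ} :
    d ≤ sSup (Finset.card '' F) ↔ ∃ T ∈ F, T.card = d := by
  have hbdd : BddAbove (Finset.card '' F) :=
    ⟨Fintype.card α, Set.forall_mem_image.2 fun T _ => T.card_le_univ⟩
  constructor
  · intro hd
    obtain ⟨S, hS, hcard⟩ := Nat.sSup_mem (hne.image _) hbdd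
    obtain ⟨T, hTS, hT⟩ := Finset.exists_subset_card_eq (hcard ▸ hd)
    exact ⟨T, hF hTS hS, hT⟩
  · rintro ⟨T, hT, rfl⟩
    exact le_csSup hbdd (Set.mem_image_of_mem _ hT)

namespace MvPolynomial

variable {σ R : Type*} [CommSemiring R] [Nontrivial R]

theorem monomial_one_mem_ideal_span_monomial_image_iff {s : Set (σ →₀ ℕ)} {τ : σ →₀ ℕ} :
    monomial τ (1 : R) ∈ Ideal.span ((fun s => monomial s (1 : R)) '' s) ↔
      ∃ si ∈ s, si ≤ τ := by
  classical
  simp [mem_ideal_span_monomial_image, support_monomial]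

theorem exists_isHomogeneous_notMem_span_monomial_iff {s : Set (σ →₀ ℕ)} {d : ℕ} :
    (∃ f : MvPolynomial σ R, f.IsHomogeneous d ∧
        f ∉ Ideal.span ((fun s => monomial s (1 : R)) '' s)) ↔
      ∃ τ : σ →₀ ℕ, τ.degree = d ∧
        monomial τ (1 : R) ∉ Ideal.span ((fun s => monomial s (1 : R)) '' s) := by
  simp only [monomial_one_mem_ideal_span_monomial_image_iff]
  constructor
  · rintro ⟨f, hf, hfs⟩
    simp only [mem_ideal_span_monomial_image, not_forall] at hfs
    obtain ⟨τ, hτ, hτs⟩ := hfs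
    refine ⟨τ, ?_, hτs⟩
    rw [Finsupp.degree_eq_weight_one]
    exact hf (mem_support_iff.mp hτ)
  · rintro ⟨τ, hτ, hτs⟩
    exact ⟨monomial τ 1, isHomogeneous_monomial 1 hτ,
      monomial_one_mem_ideal_span_monomial_image_iff.not.mpr hτs⟩

end MvPolynomial

open MvPolynomial Finsupp

section

variable {m n : ℕ} (A : Matrix (Fin m) (Fin n) Bool)

def isolationExponents : Set (Supp A →₀ ℕ) :=
  Set.range (fun p => single p 2) ∪
    (fun T => ∑ p ∈ T, single p 1) '' {T | ¬ IsIsolatedSubset A T}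

theorem isolationIdeal_eq_span_monomial (k : Type*) [Field k] :
    isolationIdeal k A = Ideal.span ((fun s => monomial s (1 : k)) '' isolationExponents A) := by
  rw [isolationIdeal, isolationExponents, Set.image_union, ← Set.range_comp, Set.image_image]
  congr 2
  · ext f
    simp only [Set.mem_ofPred_eq, Set.mem_range, Function.comp_apply, X_pow_eq_monomial]
    exact exists_congr fun p => eq_comm
  · ext f
    simp only [Set.mem_ofPred_eq, Set.mem_image, monomial_sum_one]
    exact exists_congr fun T => and_congr_right' eq_comm

theorem isLowerSet_isIsolatedSubset : IsLowerSet {T : Finset (Supp A) | IsIsolatedSubset A T} :=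
  fun _ _ hTS hS p hp q hq hpq => hS p (hTS hp) q (hTS hq) hpq

theorem exists_mem_isolationExponents_le_iff (σ : Supp A →₀ ℕ) :
    (∃ s ∈ isolationExponents A, s ≤ σ) ↔ (∃ p, 2 ≤ σ p) ∨ ¬ IsIsolatedSubset A σ.support := by
  simp only [isolationExponents, Set.mem_union, Set.mem_range, Set.mem_image, Set.mem_ofPred_eq,
    or_and_right, exists_or, exists_exists_eq_and, exists_exists_and_eq_and, single_le_iff,
    finsetSum_single_one_le_iff]
  exact or_congr Iff.rfl
    ⟨fun ⟨_, hT, hTσ⟩ hσ => hT (isLowerSet_isIsolatedSubset A hTσ hσ),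
      fun hσ => ⟨_, hσ, subset_rfl⟩⟩

theorem monomial_one_notMem_isolationIdeal_iff (k : Type*) [Field k] (σ : Supp A →₀ ℕ) :
    monomial σ (1 : k) ∉ isolationIdeal k A ↔
      (∀ p, σ p ≤ 1) ∧ IsIsolatedSubset A σ.support := by
  rw [isolationIdeal_eq_span_monomial, monomial_one_mem_ideal_span_monomial_image_iff,
    exists_mem_isolationExponents_le_iff]
  push Not
  simp only [Nat.lt_succ_iff]

theorem exists_monomial_notMem_isolationIdeal_iff (k : Type*) [Field k] (d : ℕ) :
    (∃ σ : Supp A →₀ ℕ, σ.degree = d ∧ monomial σ (1 : k) ∉ isolationIdeal k A) ↔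
      ∃ T : Finset (Supp A), IsIsolatedSubset A T ∧ T.card = d := by
  simp only [monomial_one_notMem_isolationIdeal_iff]
  constructor
  · rintro ⟨σ, rfl, hσ, hiso⟩
    exact ⟨σ.support, hiso, (degree_eq_card_support_of_le_one hσ).symm⟩
  · rintro ⟨T, hT, rfl⟩
    refine ⟨∑ p ∈ T, single p 1, degree_finsetSum_single_one T, fun p => ?_, ?_⟩
    · rw [finsetSum_single_one_apply]
      split_ifs <;> simp
    · rwa [support_finsetSum_single_one]

theorem isolationNumber_eq_sSup_card :
    isolationNumber A = sSup (Finset.card '' {T : Finset (Supp A) | IsIsolatedSubset A T}) := by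
  refine congrArg sSup (Set.ext fun s => ⟨?_, ?_⟩)
  · rintro ⟨T, ⟨hA, hT⟩, rfl⟩
    refine ⟨T.subtype _, fun p hp q hq hpq => ?_,
      by rw [Finset.card_subtype, Finset.filter_true_of_mem hA]⟩
    rw [Finset.mem_subtype] at hp hq
    exact hT _ hp _ hq (Subtype.coe_ne_coe.mpr hpq)
  · rintro ⟨T, hT, rfl⟩
    refine ⟨T.map (Function.Embedding.subtype _), ⟨?_, ?_⟩, T.card_map _⟩ <;>
      simp only [Finset.mem_map, Function.Embedding.subtype_apply]
    · rintro _ ⟨p, -, rfl⟩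
      exact p.2
    · rintro _ ⟨p, hp, rfl⟩ _ ⟨q, hq, rfl⟩ hpq
      exact hT p hp q hq (ne_of_apply_ne _ hpq)

theorem le_isolationNumber_iff {d : ℕ} :
    d ≤ isolationNumber A ↔ ∃ T : Finset (Supp A), IsIsolatedSubset A T ∧ T.card = d := by
  rw [isolationNumber_eq_sSup_card]
  exact (isLowerSet_isIsolatedSubset A).le_sSup_card_iff ⟨∅, by simp [IsIsolatedSubset]⟩

end

/-- There is a monomial of degree `d` outside `J_A` iff `d ≤ ι(A)`; consequently the
top degree of `R[A]/J_A` (the greatest `d` with a nonzero degree-`d` homogeneous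
component of the quotient) equals the isolation number `ι(A)`. -/
theorem topDegree_isolationIdeal_eq_isolationNumber (m n : ℕ)
    (A : Matrix (Fin m) (Fin n) Bool) (k : Type*) [Field k] :
    (∀ d : ℕ, (∃ σ : Supp A →₀ ℕ, (σ.sum fun _ e => e) = d ∧
        (MvPolynomial.monomial σ (1 : k)) ∉ isolationIdeal k A) ↔ d ≤ isolationNumber A) ∧
    sSup {d : ℕ | ∃ f : MvPolynomial (Supp A) k,
        f.IsHomogeneous d ∧ f ∉ isolationIdeal k A} = isolationNumber A := by
  have hmonomial : ∀ d : ℕ, (∃ σ : Supp A →₀ ℕ, (σ.sum fun _ e => e) = d ∧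
      monomial σ (1 : k) ∉ isolationIdeal k A) ↔ d ≤ isolationNumber A := fun d =>
    (exists_monomial_notMem_isolationIdeal_iff A k d).trans (le_isolationNumber_iff A).symm
  have hdegrees : {d : ℕ | ∃ f : MvPolynomial (Supp A) k,
      f.IsHomogeneous d ∧ f ∉ isolationIdeal k A} = Set.Iic (isolationNumber A) := by
    ext d
    rw [Set.mem_Iic, ← hmonomial, Set.mem_ofPred_eq, isolationIdeal_eq_span_monomial,
      exists_isHomogeneous_notMem_span_monomial_iff]
    rfl
  exact ⟨hmonomial, by rw [hdegrees, csSup_Iic]⟩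
end

section
/- Let A be an m×n Boolean matrix that is solid block diagonal with r blocks, i.e. there exist surjective maps ρ : Fin m → Fin r and γ : Fin n → Fin r such that A i j = true ↔ ρ i = γ j. Then the isolation number of A equals r: ι(A) = r. -/
/-!
The ones of a solid block diagonal matrix in the same block never form an isolated pair, so an
isolated set meets every block at most once and has at most `r` elements. Conversely, choosing
one position in each block gives an isolated set of size `r`, since positions in different
blocks are always isolated.
-/

open Finset

section isolationNumber

variable {m n : ℕ} {A : Matrix (Fin m) (Fin n) Bool}

theorem isolationNumber_le {k : ℕ} (h : ∀ T, IsIsolatedSet A T → #T ≤ k) :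
    isolationNumber A ≤ k :=
  csSup_le' <| by rintro s ⟨T, hT, rfl⟩; exact h T hT

theorem IsIsolatedSet.card_le_isolationNumber {T : Finset (Fin m × Fin n)}
    (hT : IsIsolatedSet A T) : #T ≤ isolationNumber A :=
  le_csSup ⟨_, fun _ ⟨S, _, hS⟩ => hS ▸ card_le_univ S⟩ ⟨T, hT, rfl⟩

end isolationNumber

section blockDiagonal

variable {m n : ℕ} {β : Type*} {A : Matrix (Fin m) (Fin n) Bool}
  {ρ : Fin m → β} {γ : Fin n → β}

theorem IsolatedPair.apply_fst_ne (hA : ∀ i j, A i j = true ↔ ρ i = γ j)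
    {p q : Fin m × Fin n} (hpq : IsolatedPair A p q) : ρ p.1 ≠ ρ q.1 := by
  obtain ⟨hp, hq, hnot⟩ := hpq
  rw [hA] at hp hq
  intro h
  exact hnot ⟨(hA _ _).2 (h.trans hq), (hA _ _).2 (h.symm.trans hp)⟩

theorem IsIsolatedSet.card_le_card_of_blockDiagonal [Fintype β]
    (hA : ∀ i j, A i j = true ↔ ρ i = γ j) {T : Finset (Fin m × Fin n)}
    (hT : IsIsolatedSet A T) : #T ≤ Fintype.card β := by
  classical
  have hinj : Set.InjOn (fun p : Fin m × Fin n => ρ p.1) T := fun p hp q hq h =>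
    of_not_not fun hne => (hT.2 p hp q hq hne).apply_fst_ne hA h
  rw [← card_image_of_injOn hinj]
  exact card_le_univ _

theorem isIsolatedSet_image_of_rightInverse [Fintype β] [DecidableEq β]
    (hA : ∀ i j, A i j = true ↔ ρ i = γ j) {f : β → Fin m} {g : β → Fin n}
    (hf : Function.RightInverse f ρ) (hg : Function.RightInverse g γ) :
    IsIsolatedSet A (univ.image fun k => (f k, g k)) := by
  have hone : ∀ k l, A (f k) (g l) = true ↔ k = l := fun k l => by rw [hA, hf, hg]
  refine ⟨?_, ?_⟩
  · simp only [mem_image, mem_univ, true_and, forall_exists_index, forall_apply_eq_imp_iff,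
      hone, implies_true]
  · simp only [mem_image, mem_univ, true_and, forall_exists_index, forall_apply_eq_imp_iff]
    intro k l hkl
    refine ⟨(hone k k).2 rfl, (hone l l).2 rfl, fun h => hkl ?_⟩
    rw [(hone k l).1 h.1]

end blockDiagonal

theorem isolationNumber_solidBlockDiagonal (m n r : ℕ) (A : Matrix (Fin m) (Fin n) Bool)
    (ρ : Fin m → Fin r) (γ : Fin n → Fin r)
    (hρ : Function.Surjective ρ) (hγ : Function.Surjective γ)
    (hA : ∀ i j, A i j = true ↔ ρ i = γ j) :
    isolationNumber A = r := by
  refine le_antisymm (isolationNumber_le fun T hT => ?_) ?_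
  · simpa using hT.card_le_card_of_blockDiagonal hA
  obtain ⟨f, hf⟩ := hρ.hasRightInverse
  obtain ⟨g, hg⟩ := hγ.hasRightInverse
  have hdiag := isIsolatedSet_image_of_rightInverse hA hf hg
  have hinj : Function.Injective fun k => (f k, g k) := fun k l h =>
    hf.injective (Prod.ext_iff.1 h).1
  simpa [card_image_of_injective _ hinj] using hdiag.card_le_isolationNumber
end

section
/- Let A be an m×n Boolean matrix whose support is a union of r all-ones blocks: there are families of sets R_c ⊆ Fin m and C_c ⊆ Fin n for c : Fin r with A i j = true ↔ ∃ c, i ∈ R_c ∧ j ∈ C_c. Suppose A is row separated (for every c there exists i ∈ R_c with i ∉ R_d for all d ≠ c) and column separated (for every c there exists j ∈ C_c with j ∉ C_d for all d ≠ c). Then the Boolean rank of A equals r: brank(A) = r. -/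
variable {m n : ℕ}

def IsFoolingSet {ι : Type*} (A : Matrix (Fin m) (Fin n) Bool) (row : ι → Fin m)
    (col : ι → Fin n) : Prop :=
  (∀ c, A (row c) (col c) = true) ∧
    ∀ c d, A (row c) (col d) = true → A (row d) (col c) = true → c = d

theorem boolFactorization_of_rectangles {r : ℕ} {A : Matrix (Fin m) (Fin n) Bool}
    (R : Fin r → Set (Fin m)) (C : Fin r → Set (Fin n))
    (hA : ∀ i j, A i j = true ↔ ∃ c : Fin r, i ∈ R c ∧ j ∈ C c) :
    BoolFactorization A r := by
  classical
  exact ⟨fun i c => decide (i ∈ R c), fun c j => decide (j ∈ C c), fun i j => by simp [hA]⟩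

theorem boolFactorization_rows (A : Matrix (Fin m) (Fin n) Bool) : BoolFactorization A m :=
  boolFactorization_of_rectangles (fun c => {c}) (fun c => {j | A c j = true}) (by simp)

theorem brank_le_of_boolFactorization {r : ℕ} {A : Matrix (Fin m) (Fin n) Bool}
    (h : BoolFactorization A r) : brank A ≤ r :=
  Nat.sInf_le h

theorem BoolFactorization.card_le_of_isFoolingSet {ι : Type*} [Fintype ι] {s : ℕ}
    {A : Matrix (Fin m) (Fin n) Bool} (hA : BoolFactorization A s) {row : ι → Fin m}
    {col : ι → Fin n} (hfool : IsFoolingSet A row col) : Fintype.card ι ≤ s := by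
  obtain ⟨V, H, hVH⟩ := hA
  obtain ⟨hdiag, hcross⟩ := hfool
  choose term hV hH using fun c => (hVH (row c) (col c)).1 (hdiag c)
  have hinj : Function.Injective term := fun c d hcd =>
    hcross c d ((hVH _ _).2 ⟨term c, hV c, hcd ▸ hH d⟩)
      ((hVH _ _).2 ⟨term c, hcd ▸ hV d, hH c⟩)
  simpa using Fintype.card_le_of_injective term hinj

theorem card_le_brank_of_isFoolingSet {ι : Type*} [Fintype ι]
    {A : Matrix (Fin m) (Fin n) Bool} {row : ι → Fin m} {col : ι → Fin n}
    (hfool : IsFoolingSet A row col) : Fintype.card ι ≤ brank A :=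
  le_csInf ⟨m, boolFactorization_rows A⟩ fun _ hs => hs.card_le_of_isFoolingSet hfool

theorem isFoolingSet_of_separated {r : ℕ} {A : Matrix (Fin m) (Fin n) Bool}
    {R : Fin r → Set (Fin m)} {C : Fin r → Set (Fin n)}
    (hA : ∀ i j, A i j = true ↔ ∃ c : Fin r, i ∈ R c ∧ j ∈ C c)
    {row : Fin r → Fin m} {col : Fin r → Fin n}
    (hrow : ∀ c, row c ∈ R c ∧ ∀ d, d ≠ c → row c ∉ R d)
    (hcol : ∀ c, col c ∈ C c ∧ ∀ d, d ≠ c → col c ∉ C d) :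
    IsFoolingSet A row col := by
  refine ⟨fun c => (hA _ _).2 ⟨c, (hrow c).1, (hcol c).1⟩, fun c d hcd _ => ?_⟩
  obtain ⟨e, hre, hce⟩ := (hA _ _).1 hcd
  obtain rfl : e = c := by_contra fun h => (hrow c).2 e h hre
  by_contra h
  exact (hcol d).2 e h hce

theorem brank_overlappingBlocks (m n r : ℕ) (A : Matrix (Fin m) (Fin n) Bool)
    (R : Fin r → Set (Fin m)) (C : Fin r → Set (Fin n))
    (hA : ∀ i j, A i j = true ↔ ∃ c : Fin r, i ∈ R c ∧ j ∈ C c)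
    (hrow : ∀ c : Fin r, ∃ i ∈ R c, ∀ d : Fin r, d ≠ c → i ∉ R d)
    (hcol : ∀ c : Fin r, ∃ j ∈ C c, ∀ d : Fin r, d ≠ c → j ∉ C d) :
    brank A = r := by
  choose row hrowR hrow' using hrow
  choose col hcolC hcol' using hcol
  have hfool : IsFoolingSet A row col :=
    isFoolingSet_of_separated hA (fun c => ⟨hrowR c, hrow' c⟩) (fun c => ⟨hcolC c, hcol' c⟩)
  refine le_antisymm (brank_le_of_boolFactorization (boolFactorization_of_rectangles R C hA)) ?_
  simpa using card_le_brank_of_isFoolingSet hfool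
end

section
/- Let A be an m×n Boolean matrix whose support is a union of r all-ones blocks: there are families of sets R_c ⊆ Fin m and C_c ⊆ Fin n for c : Fin r with A i j = true ↔ ∃ c, i ∈ R_c ∧ j ∈ C_c. Suppose A is row separated (for every c there exists i ∈ R_c with i ∉ R_d for all d ≠ c) and column separated (for every c there exists j ∈ C_c with j ∉ C_d for all d ≠ c). Then the isolation number of A equals r: ι(A) = r. -/
/-!
Every one of `A` lies in some block, and two ones in the same block are never isolated, since
the two crossing positions lie in that all-ones block too; so an isolated set meets each block
at most once and `ι(A) ≤ r`. Conversely, choose for each block `c` a private row `i c` and a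
private column `j c`: the entry at `(i c, j d)` can only come from a block containing both, which
forces `c = d`, so the diagonal positions `(i c, j c)` form an isolated set of size `r`.
-/

open Finset

section

variable {m n : ℕ} {A : Matrix (Fin m) (Fin n) Bool}

theorem IsolatedPair.notMem_block {R : Set (Fin m)} {C : Set (Fin n)}
    (hblock : ∀ i ∈ R, ∀ j ∈ C, A i j = true) {p q : Fin m × Fin n} (hpq : IsolatedPair A p q)
    (hp : p.1 ∈ R ∧ p.2 ∈ C) : ¬(q.1 ∈ R ∧ q.2 ∈ C) :=
  fun hq => hpq.2.2 ⟨hblock _ hp.1 _ hq.2, hblock _ hq.1 _ hp.2⟩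

theorem IsIsolatedSet.card_le_of_blocks {ι : Type*} [Fintype ι] {R : ι → Set (Fin m)}
    {C : ι → Set (Fin n)} (hblock : ∀ c, ∀ i ∈ R c, ∀ j ∈ C c, A i j = true)
    (hcover : ∀ i j, A i j = true → ∃ c, i ∈ R c ∧ j ∈ C c) {T : Finset (Fin m × Fin n)}
    (hT : IsIsolatedSet A T) : #T ≤ Fintype.card ι := by
  refine card_le_card_of_forall_subsingleton (fun p c => p.1 ∈ R c ∧ p.2 ∈ C c)
    (fun p hp => ?_) (fun c _ p hp q hq => ?_)
  · obtain ⟨c, hc⟩ := hcover _ _ (hT.1 p hp)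
    exact ⟨c, mem_univ c, hc⟩
  · by_contra hne
    exact (hT.2 p hp.1 q hq.1 hne).notMem_block (hblock c) hp.2 hq.2

theorem exists_isIsolatedSet_card_eq_of_diag {ι : Type*} [Fintype ι] {i : ι → Fin m}
    {j : ι → Fin n} (hdiag : ∀ c d, A (i c) (j d) = true ↔ c = d) :
    ∃ T, IsIsolatedSet A T ∧ #T = Fintype.card ι := by
  classical
  refine ⟨univ.image fun c => (i c, j c), ⟨?_, ?_⟩,
    card_image_of_injective _ fun c d hcd => ?_⟩
  · simp only [mem_image, mem_univ, true_and, forall_exists_index]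
    rintro _ c rfl
    exact (hdiag c c).2 rfl
  · simp only [mem_image, mem_univ, true_and, forall_exists_index]
    rintro _ c rfl _ d rfl hne
    exact ⟨(hdiag c c).2 rfl, (hdiag d d).2 rfl,
      fun h => hne (by rw [(hdiag c d).1 h.1])⟩
  · obtain ⟨hi, -⟩ := Prod.mk.inj hcd
    exact (hdiag c d).1 (hi ▸ (hdiag d d).2 rfl)

theorem isolationNumber_eq_of_isolatedSet_of_card_le {k : ℕ}
    (hex : ∃ T, IsIsolatedSet A T ∧ #T = k) (hle : ∀ T, IsIsolatedSet A T → #T ≤ k) :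
    isolationNumber A = k :=
  IsGreatest.csSup_eq ⟨hex, by rintro _ ⟨T, hT, rfl⟩; exact hle T hT⟩

end

theorem isolationNumber_overlappingBlocks (m n r : ℕ) (A : Matrix (Fin m) (Fin n) Bool)
    (R : Fin r → Set (Fin m)) (C : Fin r → Set (Fin n))
    (hA : ∀ i j, A i j = true ↔ ∃ c : Fin r, i ∈ R c ∧ j ∈ C c)
    (hrow : ∀ c : Fin r, ∃ i ∈ R c, ∀ d : Fin r, d ≠ c → i ∉ R d)
    (hcol : ∀ c : Fin r, ∃ j ∈ C c, ∀ d : Fin r, d ≠ c → j ∉ C d) :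
    isolationNumber A = r := by
  choose i hiR hiSep using hrow
  choose j hjC hjSep using hcol
  have hdiag : ∀ c d, A (i c) (j d) = true ↔ c = d := by
    refine fun c d => ⟨fun h => ?_, fun h => (hA _ _).2 ⟨c, hiR c, h ▸ hjC c⟩⟩
    obtain ⟨e, hie, hje⟩ := (hA _ _).1 h
    have hec : e = c := by_contra fun hne => hiSep c e hne hie
    have hed : e = d := by_contra fun hne => hjSep d e hne hje
    exact hec.symm.trans hed
  have hblock : ∀ c, ∀ i ∈ R c, ∀ j ∈ C c, A i j = true :=
    fun c _ hi _ hj => (hA _ _).2 ⟨c, hi, hj⟩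
  refine isolationNumber_eq_of_isolatedSet_of_card_le ?_ fun T hT => ?_
  · simpa using exists_isIsolatedSet_card_eq_of_diag hdiag
  · simpa using hT.card_le_of_blocks hblock fun i j => (hA i j).1
end
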